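/- arXiv:0810.1485 — 5 statements merged into one kernel-verified Lean document; each statement's English description precedes it below -/
import Mathlib

section
/- Let A ⊆ ℝ^d be a finite set with |A| = m. Assume that A is proper d-dimensional, i.e., A is not contained in any affine hyperplane of ℝ^d. Then the sumset A + A satisfies |A + A| ≥ m(d+1) − d(d+1)/2. -/
/-!
Induct on `#A`, removing a point `a` at which some linear functional `f` is strictly minimised
on `A` (an extreme point of the convex hull, separated from the others by Hahn–Banach). For every
`x` in `newSummands A a` the sum `a + x` is missing from `(A \ {a}) + (A \ {a})`. If `a` is not
in the affine span of `A \ {a}`, then every `x ∈ A` qualifies and the dimension drops by at most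
one. Otherwise the new summands still span `A` affinely, so there are at least `dim A + 1` of
them: were a linear `φ` constant on them but not on `A`, rotate `f` towards `φ` until
`g = f + t φ` first attains its minimum over `A \ {a}` at `a`; the lexicographic minimiser of
`(g, f)` on `A \ {a}` is then a new summand on which `φ` differs from `φ a`.
-/

open Pointwise Module Finset

instance Finset.finiteDimensional_vectorSpan {k V P : Type*} [DivisionRing k] [AddCommGroup V]
    [Module k V] [AddTorsor V P] (s : Finset P) : FiniteDimensional k (vectorSpan k (s : Set P)) :=
  finiteDimensional_vectorSpan_of_finite k s.finite_toSet

theorem finrank_vectorSpan_add_one_le_card {k V P : Type*} [DivisionRing k] [AddCommGroup V]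
    [Module k V] [AddTorsor V P] [DecidableEq P] {s : Finset P} (hs : s.Nonempty) :
    finrank k (vectorSpan k (s : Set P)) + 1 ≤ #s := by
  have := finrank_vectorSpan_image_finset_le k id s (n := #s - 1)
    (Nat.succ_pred_eq_of_pos hs.card_pos).symm
  rw [image_id] at this
  have := hs.card_pos
  omega

theorem exists_forall_add_mul_nonneg_and_exists_eq_zero {ι : Type*} (S : Finset ι)
    (u v : ι → ℝ) (hu : ∀ i ∈ S, 0 < u i) (hv : ∃ i ∈ S, v i < 0) :
    ∃ t : ℝ, (∀ i ∈ S, 0 ≤ u i + t * v i) ∧ ∃ i ∈ S, u i + t * v i = 0 := by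
  obtain ⟨i₀, hi₀, hvi₀⟩ := hv
  obtain ⟨j, hj, hmin⟩ := (S.filter (v · < 0)).exists_min_image (fun i => u i / -v i)
    ⟨i₀, mem_filter.2 ⟨hi₀, hvi₀⟩⟩
  obtain ⟨hjS, hvj⟩ := mem_filter.1 hj
  refine ⟨u j / -v j, fun i hi => ?_, j, hjS, by field_simp [hvj.ne]; ring⟩
  by_cases hvi : v i < 0
  · have := hmin i (mem_filter.2 ⟨hi, hvi⟩)
    rw [le_div_iff₀ (neg_pos.2 hvi)] at this
    linarith
  · have : 0 ≤ u j / -v j := div_nonneg (hu j hjS).le (neg_nonneg.2 hvj.le)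
    nlinarith [hu i hi]

section NewSummands

variable {E : Type*} [AddCancelCommMonoid E] [DecidableEq E]

theorem add_notMem_add_of_forall_lt_of_forall_le {M : Type*} [AddCommMonoid M] [PartialOrder M]
    [IsOrderedCancelAddMonoid M] (ψ : E →+ M) {S : Finset E} {a x : E}
    (ha : ∀ y ∈ S, ψ a < ψ y) (hx : ∀ y ∈ S, ψ x ≤ ψ y) : a + x ∉ S + S := by
  intro hmem
  obtain ⟨y, hy, z, hz, hsum⟩ := mem_add.1 hmem
  have := congrArg ψ hsum
  rw [map_add, map_add] at this
  exact (add_lt_add_of_lt_of_le (ha y hy) (hx z hz)).ne' this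

def newSummands (A : Finset E) (a : E) : Finset E :=
  A.filter fun x => a + x ∉ A.erase a + A.erase a

theorem card_add_erase_add_card_newSummands_le {A : Finset E} {a : E} (ha : a ∈ A) :
    #(A.erase a + A.erase a) + #(newSummands A a) ≤ #(A + A) := by
  have hdisj : Disjoint (A.erase a + A.erase a) ((newSummands A a).image (a + ·)) := by
    simp only [disjoint_right, mem_image]
    rintro _ ⟨x, hx, rfl⟩
    exact (mem_filter.1 hx).2
  calc #(A.erase a + A.erase a) + #(newSummands A a)
      = #(A.erase a + A.erase a ∪ (newSummands A a).image (a + ·)) := by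
        rw [card_union_of_disjoint hdisj, card_image_of_injective _ (add_right_injective a)]
    _ ≤ #(A + A) := by
        refine card_le_card (union_subset (add_subset_add (erase_subset a A) (erase_subset a A)) ?_)
        exact image_subset_iff.2 fun x hx => add_mem_add ha (mem_filter.1 hx).1

theorem self_mem_newSummands {M : Type*} [AddCommMonoid M] [PartialOrder M]
    [IsOrderedCancelAddMonoid M] {A : Finset E} {a : E} (ha : a ∈ A) (f : E →+ M)
    (hf : ∀ y ∈ A.erase a, f a < f y) : a ∈ newSummands A a :=
  mem_filter.2 ⟨ha, add_notMem_add_of_forall_lt_of_forall_le f hf fun y hy => (hf y hy).le⟩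

end NewSummands

section Span

variable {E : Type*} [AddCommGroup E] [Module ℝ E] [DecidableEq E]

theorem eq_of_forall_mem_newSummands_eq {A : Finset E} {a : E} {f φ : E →ₗ[ℝ] ℝ}
    (hf : ∀ y ∈ A.erase a, f a < f y) (hφ : ∀ x ∈ newSummands A a, φ x = φ a) :
    ∀ y ∈ A, φ y = φ a := by
  intro y₀ hy₀
  by_contra hne
  wlog hlt : φ y₀ < φ a generalizing φ
  · exact this (φ := -φ) (by simpa using hφ) (by simpa using hne)
      (by simpa using (Ne.lt_or_gt hne).resolve_left hlt)
  have hy₀' : y₀ ∈ A.erase a := mem_erase.2 ⟨fun h => hne (h ▸ rfl), hy₀⟩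
  obtain ⟨t, ht, y₁, hy₁, ht₁⟩ := exists_forall_add_mul_nonneg_and_exists_eq_zero
    (A.erase a) (fun y => f y - f a) (fun y => φ y - φ a) (fun y hy => sub_pos.2 (hf y hy))
    ⟨y₀, hy₀', sub_neg.2 hlt⟩
  set g := f + t • φ
  have hg_apply : ∀ y, g y = f y + t * φ y := fun y => rfl
  have hga : ∀ y ∈ A.erase a, g a ≤ g y := fun y hy => by
    have := ht y hy
    simp only [hg_apply]
    linarith
  let ψ : E →+ ℝ ×ₗ ℝ :=
    (toLexAddEquiv (ℝ × ℝ)).toAddMonoidHom.comp ((g : E →+ ℝ).prod f)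
  have hψa : ∀ y ∈ A.erase a, ψ a < ψ y := fun y hy =>
    Prod.Lex.toLex_lt_toLex'.2 ⟨hga y hy, fun _ => hf y hy⟩
  obtain ⟨x, hx, hxmin⟩ := (A.erase a).exists_min_image ψ ⟨y₀, hy₀'⟩
  have hφx : φ x = φ a := hφ x <| mem_filter.2
    ⟨mem_of_mem_erase hx, add_notMem_add_of_forall_lt_of_forall_le ψ hψa hxmin⟩
  have hgx : g x ≤ g y₁ := Prod.Lex.monotone_fst _ _ (hxmin y₁ hy₁)
  have := hf x hx
  rw [hg_apply, hg_apply, hφx] at hgx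
  linarith

theorem vectorSpan_le_vectorSpan_newSummands {A : Finset E} {a : E} (ha : a ∈ A)
    {f : E →ₗ[ℝ] ℝ} (hf : ∀ y ∈ A.erase a, f a < f y) :
    vectorSpan ℝ (A : Set E) ≤ vectorSpan ℝ (newSummands A a : Set E) := by
  have haG := self_mem_newSummands ha (f : E →+ ℝ) hf
  rw [vectorSpan_eq_span_vsub_set_right ℝ (mem_coe.2 ha), Submodule.span_le]
  rintro _ ⟨y, hy, rfl⟩
  by_contra hy'
  obtain ⟨φ, hφy, hφG⟩ := Submodule.exists_dual_map_eq_bot_of_notMem hy' inferInstance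
  have hφ : ∀ x ∈ newSummands A a, φ x = φ a := fun x hx => by
    have := Submodule.mem_map_of_mem (f := φ)
      (vsub_mem_vectorSpan ℝ (mem_coe.2 hx) (mem_coe.2 haG))
    rwa [hφG, Submodule.mem_bot, vsub_eq_sub, map_sub, sub_eq_zero] at this
  exact hφy (by simp only [vsub_eq_sub, map_sub, eq_of_forall_mem_newSummands_eq hf hφ y hy,
    sub_self])

theorem newSummands_eq_self_of_notMem_affineSpan {A : Finset E} {a : E}
    (ha : a ∉ affineSpan ℝ (A.erase a : Set E)) : newSummands A a = A := by
  refine filter_true_of_mem fun x hx hsum => ha ?_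
  obtain ⟨y, hy, z, hz, hyz⟩ := mem_add.1 hsum
  have hy' := subset_affineSpan ℝ _ (mem_coe.2 hy)
  have hz' := subset_affineSpan ℝ _ (mem_coe.2 hz)
  by_cases hxa : x = a
  · subst hxa
    convert AffineSubspace.smul_vsub_vadd_mem _ (2⁻¹ : ℝ) hy' hz' hz' using 1
    rw [vsub_eq_sub, vadd_eq_add]
    linear_combination (norm := module) (-2⁻¹ : ℝ) • hyz
  · have hx' := subset_affineSpan ℝ _ (mem_coe.2 (mem_erase.2 ⟨hxa, hx⟩))
    convert AffineSubspace.smul_vsub_vadd_mem _ (1 : ℝ) hy' hx' hz' using 1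
    rw [vsub_eq_sub, vadd_eq_add]
    linear_combination (norm := module) -hyz

end Span

section LocallyConvex

variable {E : Type*} [AddCommGroup E] [Module ℝ E] [TopologicalSpace E] [T2Space E]
  [IsTopologicalAddGroup E] [ContinuousSMul ℝ E] [LocallyConvexSpace ℝ E] [DecidableEq E]

theorem Finset.exists_mem_exists_forall_erase_lt {A : Finset E} (hA : A.Nonempty) :
    ∃ a ∈ A, ∃ f : E →L[ℝ] ℝ, ∀ y ∈ A.erase a, f a < f y := by
  obtain ⟨a, ha⟩ := (A.finite_toSet.isCompact_convexHull ℝ).extremePoints_nonempty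
    (convexHull_nonempty_iff.2 hA.to_set)
  have hsub : convexHull ℝ (A.erase a : Set E) ⊆ convexHull ℝ A \ {a} :=
    convexHull_min
      (fun y hy => ⟨subset_convexHull ℝ _ (erase_subset a A hy), ne_of_mem_erase hy⟩)
      ((convex_convexHull ℝ _).mem_extremePoints_iff_convex_sdiff.1 ha).2
  obtain ⟨f, u, hfa, hfu⟩ := geometric_hahn_banach_point_closed (convex_convexHull ℝ _)
    ((A.erase a).finite_toSet.isClosed_convexHull ℝ) fun h => (hsub h).2 rfl
  exact ⟨a, extremePoints_convexHull_subset ha, f, fun y hy =>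
    hfa.trans (hfu y (subset_convexHull ℝ _ hy))⟩

theorem two_mul_finrank_add_one_mul_card_le (A : Finset E) :
    2 * (finrank ℝ (vectorSpan ℝ (A : Set E)) + 1) * #A ≤ 2 * #(A + A) +
      finrank ℝ (vectorSpan ℝ (A : Set E)) * (finrank ℝ (vectorSpan ℝ (A : Set E)) + 1) := by
  induction A using Finset.strongInduction with | H A ih =>
  rcases A.eq_empty_or_nonempty with rfl | hA
  · simp
  obtain ⟨a, ha, f, hf⟩ := A.exists_mem_exists_forall_erase_lt hA
  have hS := ih (A.erase a) (erase_ssubset ha)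
  have hcount := card_add_erase_add_card_newSummands_le ha
  have hcard := card_erase_add_one ha
  have hkA := finrank_vectorSpan_add_one_le_card (k := ℝ) hA
  have hins : (A : Set E) = insert a (A.erase a : Set E) := by rw [← coe_insert, insert_erase ha]
  by_cases haS : a ∈ affineSpan ℝ (A.erase a : Set E)
  · have hG : finrank ℝ (vectorSpan ℝ (A : Set E)) + 1 ≤ #(newSummands A a) :=
      (Nat.succ_le_succ (Submodule.finrank_mono (vectorSpan_le_vectorSpan_newSummands ha hf))).trans
        (finrank_vectorSpan_add_one_le_card ⟨a, self_mem_newSummands ha (f : E →+ ℝ) hf⟩)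
    rw [hins, vectorSpan_insert_eq_vectorSpan haS] at hG hkA ⊢
    nlinarith
  · have hk'k := Submodule.finrank_mono (vectorSpan_mono ℝ (coe_subset.2 (erase_subset a A)))
    have hkk' := finrank_vectorSpan_insert_le_set ℝ (A.erase a : Set E) a
    rw [← hins] at hkk'
    rw [newSummands_eq_self_of_notMem_affineSpan haS] at hcount
    nlinarith

end LocallyConvex

theorem freiman_dimension_bound (d m : ℕ) (A : Finset (Fin d → ℝ))
    (hm : A.card = m)
    (hA : affineSpan ℝ (A : Set (Fin d → ℝ)) = ⊤) :
    ((A + A).card : ℤ) ≥ m * (d + 1) - d * (d + 1) / 2 := by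
  have hk : finrank ℝ (vectorSpan ℝ (A : Set (Fin d → ℝ))) = d := by
    rw [← direction_affineSpan, hA, AffineSubspace.direction_top, finrank_top, finrank_fin_fun]
  have key := two_mul_finrank_add_one_mul_card_le A
  rw [hk, hm] at key
  obtain ⟨q, hq⟩ := Nat.even_mul_succ_self d
  have hdiv : (d * (d + 1) / 2 : ℤ) = q := by
    zify at hq
    rw [hq]
    omega
  rw [hdiv]
  zify at key hq
  linarith
end

section
/- Let k ≥ 2 and let A_1, …, A_k be finite nonempty sets of integers. For each i let A_i' be the two-element (or one-element, if A_i is a singleton) set consisting of the smallest and the largest elements of A_i. Put S = A_1 + ⋯ + A_k, S_i = A_1 + ⋯ + A_{i−1} + A_{i+1} + ⋯ + A_k (the sum omitting A_i), S_i' = A_1 + ⋯ + A_{i−1} + A_i' + A_{i+1} + ⋯ + A_k, and S' = ⋃_{i=1}^k S_i'. Then |S| ≥ |S'| ≥ (1/(k−1))·Σ_{i=1}^k |S_i| − 1/(k−1). -/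
/-!
Put `aᵢ = min Aᵢ`, `bᵢ = max Aᵢ` and interpolate between `min S = ∑ aᵢ` and `max S = ∑ bᵢ`
by the thresholds `cₘ = b₀ + ⋯ + bₘ₋₁ + aₘ + ⋯ + aₖ₋₁`, so that `cᵢ - aᵢ = cᵢ₊₁ - bᵢ =: tᵢ`.
Splitting `Sᵢ` at `tᵢ`, the translate by `aᵢ` of its lower part lies in `S' ∩ (-∞, cᵢ]` and the
translate by `bᵢ` of its upper part in `S' ∩ (cᵢ₊₁, ∞)`. Summing over `i`, each interior
threshold `c₁, …, cₖ₋₁` splits `S'` exactly once, and since `S' ⊆ S ⊆ [c₀, cₖ]` the two ends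
contribute at most one element: `∑ |Sᵢ| ≤ (k - 1)|S'| + 1`.
-/

open Pointwise Finset

theorem Finset.sum_subset_Icc_sum {ι α : Type*} [AddCommMonoid α] [PartialOrder α]
    [IsOrderedAddMonoid α] [LocallyFiniteOrder α] [DecidableEq α] [DecidableEq ι]
    (s : Finset ι) (A : ι → Finset α) (a b : ι → α) (h : ∀ j ∈ s, A j ⊆ Icc (a j) (b j)) :
    ∑ j ∈ s, A j ⊆ Icc (∑ j ∈ s, a j) (∑ j ∈ s, b j) := by
  induction s using Finset.induction_on with
  | empty => simp only [sum_empty, Icc_self]; rfl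
  | insert i s hi ih =>
    simp only [sum_insert hi]
    refine (add_subset_add (h i (mem_insert_self i s)) ?_).trans (Icc_add_Icc_subset _ _ _ _)
    exact ih fun j hj => h j (mem_insert_of_mem hj)

theorem Finset.card_le_card_filter_le_add_card_filter_lt {α : Type*} [AddCommMonoid α]
    [LinearOrder α] [IsOrderedCancelAddMonoid α] {X Y : Finset α} {a b : α}
    (ha : ∀ x ∈ X, a + x ∈ Y) (hb : ∀ x ∈ X, b + x ∈ Y) (t : α) :
    #X ≤ #{y ∈ Y | y ≤ a + t} + #{y ∈ Y | b + t < y} := by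
  rw [← card_filter_add_card_filter_not (· ≤ t)]
  refine add_le_add ?_ ?_
  · refine card_le_card_of_injOn (a + ·) (fun x hx => ?_) (add_right_injective a).injOn
    simp only [coe_filter, Set.mem_ofPred_eq] at hx ⊢
    exact ⟨ha x hx.1, add_le_add_right hx.2 a⟩
  · refine card_le_card_of_injOn (b + ·) (fun x hx => ?_) (add_right_injective b).injOn
    simp only [coe_filter, Set.mem_ofPred_eq, not_le] at hx ⊢
    exact ⟨hb x hx.1, add_lt_add_right hx.2 b⟩

theorem Finset.sum_range_card_filter_le_add_card_filter_lt {α : Type*} [LinearOrder α]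
    (X : Finset α) (c : ℕ → α) (n : ℕ) :
    ∑ i ∈ range (n + 1), (#{x ∈ X | x ≤ c i} + #{x ∈ X | c (i + 1) < x}) =
      #{x ∈ X | x ≤ c 0} + n * #X + #{x ∈ X | c (n + 1) < x} := by
  induction n with
  | zero => simp
  | succ n ih =>
    have hsplit : #{x ∈ X | c (n + 1) < x} + #{x ∈ X | x ≤ c (n + 1)} = #X := by
      simpa only [not_lt] using card_filter_add_card_filter_not (s := X) (c (n + 1) < ·)
    rw [sum_range_succ, ih, ← hsplit]
    ring

theorem Fin.sum_ite_val_lt_succ_add {M : Type*} [AddCommMonoid M] {k : ℕ} (a b : Fin k → M)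
    (i : Fin k) :
    (∑ j : Fin k, if (j : ℕ) < i + 1 then b j else a j) + a i =
      (∑ j : Fin k, if (j : ℕ) < i then b j else a j) + b i := by
  have hrest : ∀ j ∈ univ.erase i,
      (if (j : ℕ) < i + 1 then b j else a j) = if (j : ℕ) < i then b j else a j := by
    intro j hj
    have hji : (j : ℕ) ≠ i := Fin.val_ne_of_ne (ne_of_mem_erase hj)
    simp only [Nat.lt_succ_iff_lt_or_eq, hji, or_false]
  rw [← add_sum_erase _ _ (mem_univ i), ← add_sum_erase _ _ (mem_univ i), sum_congr rfl hrest]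
  simp only [lt_add_one, if_true, lt_irrefl, if_false]
  abel

theorem Finset.sum_card_le_mul_card_add_one {α : Type*} [AddCommGroup α] [LinearOrder α]
    [IsOrderedAddMonoid α] [LocallyFiniteOrder α] {n : ℕ} {X : Finset α}
    {T : Fin (n + 1) → Finset α} {a b : Fin (n + 1) → α}
    (ha : ∀ i, ∀ x ∈ T i, a i + x ∈ X) (hb : ∀ i, ∀ x ∈ T i, b i + x ∈ X)
    (hX : X ⊆ Icc (∑ i, a i) (∑ i, b i)) :
    ∑ i, #(T i) ≤ n * #X + 1 := by
  set c : ℕ → α := fun m => ∑ j : Fin (n + 1), if (j : ℕ) < m then b j else a j with hc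
  have hXc : X ⊆ Icc (c 0) (c (n + 1)) := by simpa [hc, Fin.is_le] using hX
  have hT : ∀ i : Fin (n + 1), #(T i) ≤ #{x ∈ X | x ≤ c i} + #{x ∈ X | c (i + 1) < x} := by
    intro i
    have hstep : b i + (c i - a i) = c (i + 1) := by
      simp only [hc]
      rw [eq_sub_of_add_eq (Fin.sum_ite_val_lt_succ_add a b i)]
      abel
    simpa only [add_sub_cancel, hstep] using
      card_le_card_filter_le_add_card_filter_lt (ha i) (hb i) (c i - a i)
  have hbot : #{x ∈ X | x ≤ c 0} ≤ 1 :=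
    card_le_one.2 fun x hx y hy => by
      have hx' := (mem_Icc.1 (hXc (mem_filter.1 hx).1)).1
      have hy' := (mem_Icc.1 (hXc (mem_filter.1 hy).1)).1
      exact (le_antisymm (mem_filter.1 hx).2 hx').trans (le_antisymm (mem_filter.1 hy).2 hy').symm
  have htop : #{x ∈ X | c (n + 1) < x} = 0 :=
    card_eq_zero.2 (filter_false_of_mem fun x hx => not_lt.2 (mem_Icc.1 (hXc hx)).2)
  calc ∑ i, #(T i)
      ≤ ∑ i : Fin (n + 1), (#{x ∈ X | x ≤ c i} + #{x ∈ X | c (i + 1) < x}) :=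
        sum_le_sum fun i _ => hT i
    _ = #{x ∈ X | x ≤ c 0} + n * #X + #{x ∈ X | c (n + 1) < x} := by
        rw [Fin.sum_univ_eq_sum_range (fun i => #{x ∈ X | x ≤ c i} + #{x ∈ X | c (i + 1) < x}),
          sum_range_card_filter_le_add_card_filter_lt]
    _ ≤ n * #X + 1 := by omega

theorem subsums_superadditivity (k : ℕ) (hk : 2 ≤ k)
    (A : Fin k → Finset ℤ) (hA : ∀ i, (A i).Nonempty)
    (A' : Fin k → Finset ℤ)
    (hA' : ∀ i, A' i = {(A i).min' (hA i), (A i).max' (hA i)})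
    (S : Finset ℤ) (hS : S = ∑ i, A i)
    (Si : Fin k → Finset ℤ)
    (hSi : ∀ i, Si i = ∑ j ∈ Finset.univ.erase i, A j)
    (Si' : Fin k → Finset ℤ)
    (hSi' : ∀ i, Si' i = A' i + Si i)
    (S' : Finset ℤ) (hS' : S' = Finset.univ.biUnion Si') :
    (S.card : ℚ) ≥ (S'.card : ℚ) ∧
    (S'.card : ℚ) ≥ (1 / ((k : ℚ) - 1)) * ∑ i, ((Si i).card : ℚ) - 1 / ((k : ℚ) - 1) := by
  obtain ⟨n, rfl⟩ : ∃ n, k = n + 1 := ⟨k - 1, by omega⟩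
  have hS'S : S' ⊆ S := by
    refine hS' ▸ biUnion_subset.2 fun i _ => ?_
    have hA'A : A' i ⊆ A i := by simp [hA', insert_subset_iff, min'_mem, max'_mem]
    rw [hSi', hS, ← add_sum_erase _ _ (mem_univ i), ← hSi]
    exact add_subset_add_right hA'A
  have hSIcc : S ⊆ Icc (∑ i, (A i).min' (hA i)) (∑ i, (A i).max' (hA i)) :=
    hS ▸ sum_subset_Icc_sum _ _ _ _ fun j _ x hx => mem_Icc.2 ⟨min'_le _ _ hx, le_max' _ _ hx⟩
  have hmem : ∀ i, ∀ t ∈ A' i, ∀ x ∈ Si i, t + x ∈ S' := fun i t ht x hx =>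
    hS' ▸ mem_biUnion.2 ⟨i, mem_univ i, hSi' i ▸ add_mem_add ht hx⟩
  have hkey : ∑ i, #(Si i) ≤ n * #S' + 1 :=
    sum_card_le_mul_card_add_one (fun i => hmem i _ (hA' i ▸ mem_insert_self _ _))
      (fun i => hmem i _ (hA' i ▸ mem_insert_of_mem (mem_singleton_self _))) (hS'S.trans hSIcc)
  refine ⟨by exact_mod_cast card_le_card hS'S, ?_⟩
  have hn : (0 : ℚ) < n := by exact_mod_cast (by omega : 0 < n)
  have hkeyℚ : (∑ i, (#(Si i) : ℚ)) ≤ n * #S' + 1 := by exact_mod_cast hkey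
  push_cast
  rw [ge_iff_le, add_sub_cancel_right, one_div_mul_eq_div, ← sub_div, div_le_iff₀ hn]
  linarith
end

section
/- Let A, B ⊆ ℝ^d be finite sets with |A| = m and |B| = d+1. Assume that B is proper d-dimensional (so B is the vertex set of a d-dimensional simplex) and that A is contained in the convex hull of B. Let k be a positive integer and write m_1 = |A ∩ B|. Then |A + kB| = (m − m_1)·C(d+k, k) + C(d+k+1, k+1) − C(d − m_1 + k + 1, k+1). -/
open Pointwise

/-- The `k`-fold sumset `B + B + ⋯ + B` (`k` summands). -/
def kfoldSumset {α : Type*} [AddCommMonoid α] [DecidableEq α]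
    (k : ℕ) (B : Finset α) : Finset α :=
  ∑ _i ∈ Finset.range k, B

open Finset

lemma card_piAntidiag_univ {ι : Type*} [Fintype ι] [DecidableEq ι] (n : ℕ) :
    (Finset.piAntidiag (Finset.univ : Finset ι) n).card = (Fintype.card ι + n - 1).choose n := by
  classical
  rw [← Finset.map_sym_eq_piAntidiag, Finset.card_map, Finset.sym_univ, Finset.card_univ,
    Sym.card_sym_eq_choose]

lemma card_piAntidiag' {ι : Type*} [DecidableEq ι] (s : Finset ι) (n : ℕ) :
    (Finset.piAntidiag s n).card = (s.card + n - 1).choose n := by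
  classical
  rw [← Fintype.card_coe s, ← card_piAntidiag_univ (ι := ↥s) n]
  apply Finset.card_bij (fun f _ => f ∘ Subtype.val)
  · intro f hf
    simp only [Finset.mem_piAntidiag] at hf ⊢
    refine ⟨?_, fun i _ => Finset.mem_univ i⟩
    rw [← hf.1]
    exact Finset.sum_coe_sort s f
  · intro f hf g hg h
    simp only [Finset.mem_piAntidiag] at hf hg
    funext i
    by_cases hi : i ∈ s
    · exact congrFun h ⟨i, hi⟩
    · rw [not_imp_comm.1 (hf.2 i) hi, not_imp_comm.1 (hg.2 i) hi]
  · intro g hg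
    simp only [Finset.mem_piAntidiag] at hg
    refine ⟨fun i => if h : i ∈ s then g ⟨i, h⟩ else 0, ?_, ?_⟩
    · simp only [Finset.mem_piAntidiag]
      constructor
      · rw [← hg.1, Finset.sum_dite_of_true (fun _ h => h)]

      · intro i hi
        by_contra h
        simp [h] at hi
    · funext i; simp

theorem simplex_case_formula (d m k m₁ : ℕ) (hk : 0 < k)
    (A B : Finset (Fin d → ℝ))
    (hm : A.card = m) (hB : B.card = d + 1)
    (hBspan : affineSpan ℝ (B : Set (Fin d → ℝ)) = ⊤)
    (hAB : (A : Set (Fin d → ℝ)) ⊆ convexHull ℝ (B : Set (Fin d → ℝ)))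
    (hm₁ : (A ∩ B).card = m₁) :
    ((A + kfoldSumset k B).card : ℤ)
      = ((m : ℤ) - (m₁ : ℤ)) * (d + k).choose k
        + (d + k + 1).choose (k + 1) - ((d + k + 1 - m₁).choose (k + 1)) := by
  classical
  have hcard : Fintype.card ↥B = d + 1 := by rw [Fintype.card_coe, hB]
  set e := Fintype.equivFinOfCardEq hcard with he
  set b : Fin (d + 1) → (Fin d → ℝ) := fun i => ((e.symm i : ↥B) : Fin d → ℝ) with hb
  have hbinj : Function.Injective b := fun i j h =>
    e.symm.injective (Subtype.coe_injective h)
  have hbB : Finset.univ.image b = B := by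
    ext x
    simp only [Finset.mem_image, Finset.mem_univ, true_and]
    constructor
    · rintro ⟨i, rfl⟩; exact (e.symm i).2
    · intro hx; exact ⟨e ⟨x, hx⟩, by simp [hb]⟩
  have hbmem : ∀ i, b i ∈ B := fun i => (e.symm i).2
  have hrange : Set.range b = (B : Set (Fin d → ℝ)) := by
    rw [← hbB]; simp [Set.image_univ]
  have hindep : AffineIndependent ℝ b := by
    rw [affineIndependent_iff_finrank_vectorSpan_eq ℝ b (by simp : Fintype.card (Fin (d+1)) = d + 1)]
    rw [hrange, ← direction_affineSpan, hBspan, AffineSubspace.direction_top]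
    rw [finrank_top]
    exact Module.finrank_fin_fun ℝ
  -- uniqueness of weighted representations
  have star : ∀ c c' : Fin (d+1) → ℝ, ∑ i, c i = ∑ i, c' i →
      ∑ i, c i • b i = ∑ i, c' i • b i → c = c' := by
    intro c c' h1 h2
    have hz := hindep.eq_zero_of_sum_eq_zero (w := c - c') (s := Finset.univ)
      (by simp [Finset.sum_sub_distrib, h1]) (by simp [sub_smul, Finset.sum_sub_distrib, h2])
    funext i
    have := hz i (Finset.mem_univ i)
    simpa [sub_eq_zero] using this
  -- barycentric coordinates of points of A
  have coords : ∀ a ∈ A, ∃ α : Fin (d+1) → ℝ,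
      (∀ i, 0 ≤ α i) ∧ ∑ i, α i = 1 ∧ ∑ i, α i • b i = a := by
    intro a ha
    have h := hAB ha
    rw [Finset.convexHull_eq] at h
    obtain ⟨w, hw0, hw1, hwa⟩ := h
    refine ⟨fun i => w (b i), fun i => hw0 _ (hbmem i), ?_, ?_⟩
    · rw [← hw1, ← hbB, Finset.sum_image (fun i _ j _ h => hbinj h)]
    · rw [Finset.centerMass_eq_of_sum_1 _ _ hw1] at hwa
      rw [← hwa, ← hbB, Finset.sum_image (fun i _ j _ h => hbinj h)]
      simp
  -- vertex detection
  have vertex : ∀ α : Fin (d+1) → ℝ, (∀ i, 0 ≤ α i) → ∑ i, α i = 1 →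
      ∀ i, α i = 1 → ∑ j, α j • b j = b i := by
    intro α h0 h1 i hi
    have herase : ∑ j ∈ Finset.univ.erase i, α j = 0 := by
      have := Finset.add_sum_erase Finset.univ α (Finset.mem_univ i)
      rw [hi, h1] at this
      linarith
    have hall : ∀ j ∈ Finset.univ.erase i, α j = 0 := by
      intro j hj
      exact (Finset.sum_eq_zero_iff_of_nonneg (fun j _ => h0 j)).1 herase j hj
    rw [← Finset.add_sum_erase Finset.univ (fun j => α j • b j) (Finset.mem_univ i), hi, one_smul]
    rw [Finset.sum_eq_zero (fun j hj => by rw [hall j hj, zero_smul]), add_zero]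
  -- the linear map on natural weight vectors
  set P : (Fin (d+1) → ℕ) → (Fin d → ℝ) := fun c => ∑ i, (c i : ℝ) • b i with hP
  have Pupdate : ∀ (c : Fin (d+1) → ℕ) i, P (Function.update c i (c i + 1)) = P c + b i := by
    intro c i
    have hfun : (fun j => ((Function.update c i (c i + 1) j : ℕ) : ℝ) • b j)
        = Function.update (fun j => ((c j : ℕ) : ℝ) • b j) i (((c i + 1 : ℕ) : ℝ) • b i) := by
      funext j
      by_cases hj : j = i
      · subst hj; simp
      · simp [Function.update_of_ne hj]
    rw [hP]
    simp only [hfun]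
    rw [Finset.sum_update_of_mem (Finset.mem_univ i)]
    rw [← Finset.add_sum_erase Finset.univ (fun j => ((c j : ℕ) : ℝ) • b j) (Finset.mem_univ i),
      Finset.erase_eq]
    push_cast
    rw [add_smul, one_smul]
    abel
  have Supdate : ∀ (c : Fin (d+1) → ℕ) i, ∑ j, Function.update c i (c i + 1) j = (∑ j, c j) + 1 := by
    intro c i
    rw [Finset.sum_update_of_mem (Finset.mem_univ i)]
    rw [← Finset.add_sum_erase Finset.univ c (Finset.mem_univ i), Finset.erase_eq]
    omega
  -- description of the k-fold sumset
  have kfold : ∀ n : ℕ, kfoldSumset n B = (Finset.piAntidiag (Finset.univ : Finset (Fin (d+1))) n).image P := by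
    intro n
    induction n with
    | zero =>
      rw [kfoldSumset]
      simp only [Finset.range_zero, Finset.sum_empty, Finset.piAntidiag_zero]
      ext x
      simp [Finset.mem_zero, hP, eq_comm]
    | succ n ih =>
      have hstep : kfoldSumset (n+1) B = kfoldSumset n B + B := by
        rw [kfoldSumset, kfoldSumset, Finset.sum_range_succ]
      rw [hstep, ih]
      ext x
      constructor
      · intro hx
        rw [Finset.mem_add] at hx
        obtain ⟨y, hy, z, hz, rfl⟩ := hx
        rw [Finset.mem_image] at hy
        obtain ⟨c, hc, rfl⟩ := hy
        rw [Finset.mem_piAntidiag] at hc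
        rw [← hbB, Finset.mem_image] at hz
        obtain ⟨i, -, rfl⟩ := hz
        rw [Finset.mem_image]
        exact ⟨Function.update c i (c i + 1), by
          rw [Finset.mem_piAntidiag]
          exact ⟨by rw [Supdate, hc.1], fun _ _ => Finset.mem_univ _⟩,
          (Pupdate c i)⟩
      · intro hx
        rw [Finset.mem_image] at hx
        obtain ⟨c, hc, rfl⟩ := hx
        rw [Finset.mem_piAntidiag] at hc
        have hne : ∃ i ∈ Finset.univ, c i ≠ 0 :=
          Finset.exists_ne_zero_of_sum_ne_zero (by rw [hc.1]; omega)
        obtain ⟨i, -, hi⟩ := hne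
        set c' := Function.update c i (c i - 1) with hc'
        have hcc : Function.update c' i (c' i + 1) = c := by
          funext j
          by_cases hj : j = i
          · subst hj; simp [hc']; omega
          · simp [hc', Function.update_of_ne hj]
        have hc'sum : ∑ j, c' j = n := by
          have := Supdate c' i
          rw [hcc, hc.1] at this
          omega
        rw [Finset.mem_add]
        refine ⟨P c', ?_, b i, hbmem i, ?_⟩
        · rw [Finset.mem_image]
          exact ⟨c', by rw [Finset.mem_piAntidiag]; exact ⟨hc'sum, fun _ _ => Finset.mem_univ _⟩, rfl⟩
        · rw [← Pupdate c' i, hcc]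
  -- P is injective on weight vectors with a fixed sum
  have Pinj : ∀ (t : ℕ) (c c' : Fin (d+1) → ℕ), ∑ i, c i = t → ∑ i, c' i = t →
      P c = P c' → c = c' := by
    intro t c c' hc hc' h
    have := star (fun i => (c i : ℝ)) (fun i => (c' i : ℝ))
      (by rw_mod_cast [hc, hc']) h
    funext i
    exact_mod_cast congrFun this i
  -- main separation lemma
  have L1 : ∀ a ∈ A, a ∉ B → ∀ a' ∈ A, ∀ c c' : Fin (d+1) → ℕ,
      ∑ i, c i = k → ∑ i, c' i = k → a + P c = a' + P c' → a = a' ∧ c = c' := by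
    intro a ha haB a' ha' c c' hc hc' heq
    obtain ⟨α, hα0, hα1, hαa⟩ := coords a ha
    obtain ⟨β, hβ0, hβ1, hβa⟩ := coords a' ha'
    have hsum : ∑ i, (α i + (c i : ℝ)) = ∑ i, (β i + (c' i : ℝ)) := by
      rw [Finset.sum_add_distrib, Finset.sum_add_distrib, hα1, hβ1]
      rw_mod_cast [hc, hc']
    have hpt : ∑ i, (α i + (c i : ℝ)) • b i = ∑ i, (β i + (c' i : ℝ)) • b i := by
      simp only [add_smul, Finset.sum_add_distrib, hαa, hβa]
      exact heq
    have key := star _ _ hsum hpt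
    have keyi : ∀ i, α i + (c i : ℝ) = β i + (c' i : ℝ) := fun i => congrFun key i
    have hle : ∀ i, c' i ≤ c i := by
      intro i
      by_contra hlt
      push_neg at hlt
      have h1 : (1 : ℝ) ≤ α i := by
        have hk := keyi i
        have : ((c i : ℝ)) + 1 ≤ (c' i : ℝ) := by exact_mod_cast hlt
        nlinarith [hβ0 i]
      have hle1 : α i ≤ 1 := by
        calc α i ≤ ∑ j, α j := Finset.single_le_sum (fun j _ => hα0 j) (Finset.mem_univ i)
        _ = 1 := hα1
      have hone : α i = 1 := le_antisymm hle1 h1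
      exact haB (by rw [← hαa, vertex α hα0 hα1 i hone]; exact hbmem i)
    have hcc : c = c' := by
      funext i
      by_contra hne
      have hlt : c' i < c i := lt_of_le_of_ne (hle i) (Ne.symm hne)
      have : ∑ j, c' j < ∑ j, c j :=
        Finset.sum_lt_sum (fun j _ => hle j) ⟨i, Finset.mem_univ i, hlt⟩
      omega
    have hαβ : α = β := by
      funext i
      have := keyi i
      rw [hcc] at this
      linarith
    refine ⟨by rw [← hαa, ← hβa, hαβ], hcc⟩
  set kB := (Finset.piAntidiag (Finset.univ : Finset (Fin (d+1))) k).image P with hkBdef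
  have hkB : kfoldSumset k B = kB := kfold k
  have memkB : ∀ x ∈ kB, ∃ c : Fin (d+1) → ℕ, (∑ i, c i = k) ∧ P c = x := by
    intro x hx
    rw [hkBdef, Finset.mem_image] at hx
    obtain ⟨c, hc, rfl⟩ := hx
    rw [Finset.mem_piAntidiag] at hc
    exact ⟨c, hc.1, rfl⟩
  have cardkB : kB.card = (d + k).choose k := by
    rw [hkBdef, Finset.card_image_of_injOn, card_piAntidiag_univ]
    · rw [Fintype.card_fin]
      congr 1
      omega
    · intro c hc c' hc' h
      rw [Finset.mem_coe, Finset.mem_piAntidiag] at hc hc'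
      exact Pinj k c c' hc.1 hc'.1 h
  -- Part 1 : the translates of kB by points of A \ B
  have hsplit : (A \ B) + kB = (A \ B).biUnion (fun a => kB.image (a + ·)) := by
    ext x
    simp only [Finset.mem_add, Finset.mem_biUnion, Finset.mem_image]
  have hdisj1 : ∀ a ∈ A \ B, ∀ a' ∈ A \ B, a ≠ a' →
      Disjoint (kB.image (a + ·)) (kB.image (a' + ·)) := by
    intro a ha a' ha' hne
    rw [Finset.disjoint_left]
    rintro x hx hx'
    rw [Finset.mem_image] at hx hx'
    obtain ⟨z, hz, rfl⟩ := hx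
    obtain ⟨z', hz', heq⟩ := hx'
    obtain ⟨c, hc, rfl⟩ := memkB z hz
    obtain ⟨c', hc', rfl⟩ := memkB z' hz'
    rw [Finset.mem_sdiff] at ha ha'
    exact hne (L1 a ha.1 ha.2 a' ha'.1 c c' hc hc' heq.symm).1
  have part1 : ((A \ B) + kB).card = (A \ B).card * (d + k).choose k := by
    rw [hsplit, Finset.card_biUnion hdisj1]
    rw [Finset.sum_congr rfl (fun a _ => Finset.card_image_of_injective kB (add_right_injective a))]
    rw [Finset.sum_const, smul_eq_mul, cardkB]
  -- Part 2 : the translates by points of A ∩ B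
  set T := (Finset.piAntidiag (Finset.univ : Finset (Fin (d+1))) (k+1)).filter
      (fun c => ∃ i, b i ∈ A ∧ c i ≠ 0) with hT
  have part2 : (A ∩ B) + kB = T.image P := by
    ext x
    constructor
    · intro hx
      rw [Finset.mem_add] at hx
      obtain ⟨v, hv, z, hz, rfl⟩ := hx
      obtain ⟨c, hc, rfl⟩ := memkB z hz
      rw [Finset.mem_inter] at hv
      have : v ∈ Finset.univ.image b := by rw [hbB]; exact hv.2
      rw [Finset.mem_image] at this
      obtain ⟨i, -, rfl⟩ := this
      rw [Finset.mem_image]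
      refine ⟨Function.update c i (c i + 1), ?_, ?_⟩
      · rw [hT, Finset.mem_filter, Finset.mem_piAntidiag]
        refine ⟨⟨by rw [Supdate, hc], fun _ _ => Finset.mem_univ _⟩, i, hv.1, by simp⟩
      · rw [Pupdate]
        rw [add_comm]
    · intro hx
      rw [Finset.mem_image] at hx
      obtain ⟨c, hc, rfl⟩ := hx
      rw [hT, Finset.mem_filter, Finset.mem_piAntidiag] at hc
      obtain ⟨⟨hcsum, -⟩, i, hiA, hi⟩ := hc
      set c' := Function.update c i (c i - 1) with hc'
      have hcc : Function.update c' i (c' i + 1) = c := by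
        funext j
        by_cases hj : j = i
        · subst hj; simp [hc']; omega
        · simp [hc', Function.update_of_ne hj]
      have hc'sum : ∑ j, c' j = k := by
        have := Supdate c' i
        rw [hcc, hcsum] at this
        omega
      rw [Finset.mem_add]
      refine ⟨b i, Finset.mem_inter.2 ⟨hiA, hbmem i⟩, P c', ?_, ?_⟩
      · rw [hkBdef, Finset.mem_image]
        exact ⟨c', by rw [Finset.mem_piAntidiag]; exact ⟨hc'sum, fun _ _ => Finset.mem_univ _⟩, rfl⟩
      · rw [add_comm, ← Pupdate c' i, hcc]
  have cardT : ((A ∩ B) + kB).card = T.card := by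
    rw [part2, Finset.card_image_of_injOn]
    intro c hc c' hc' h
    rw [Finset.mem_coe, hT, Finset.mem_filter, Finset.mem_piAntidiag] at hc hc'
    exact Pinj (k+1) c c' hc.1.1 hc'.1.1 h
  -- counting T via its complement
  set S := Finset.univ.filter (fun i : Fin (d+1) => b i ∉ A) with hS
  have hposcard : (Finset.univ.filter (fun i : Fin (d+1) => b i ∈ A)).card = m₁ := by
    have himg : (Finset.univ.filter (fun i : Fin (d+1) => b i ∈ A)).image b = B ∩ A := by
      ext x
      simp only [Finset.mem_image, Finset.mem_filter, Finset.mem_univ, true_and, Finset.mem_inter]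
      constructor
      · rintro ⟨i, hiA, rfl⟩; exact ⟨hbmem i, hiA⟩
      · rintro ⟨hxB, hxA⟩
        have hx : x ∈ Finset.univ.image b := by rw [hbB]; exact hxB
        rw [Finset.mem_image] at hx
        obtain ⟨i, -, rfl⟩ := hx
        exact ⟨i, hxA, rfl⟩
    have := Finset.card_image_of_injective
      (Finset.univ.filter (fun i : Fin (d+1) => b i ∈ A)) hbinj
    rw [himg, Finset.inter_comm, hm₁] at this
    omega
  have hScard : m₁ + S.card = d + 1 := by
    have := Finset.card_filter_add_card_filter_not
      (s := (Finset.univ : Finset (Fin (d+1)))) (p := fun i => b i ∈ A)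
    rw [hposcard, Finset.card_univ, Fintype.card_fin] at this
    exact this
  have hTc : (Finset.piAntidiag (Finset.univ : Finset (Fin (d+1))) (k+1)).filter
      (fun c => ¬ ∃ i, b i ∈ A ∧ c i ≠ 0) = Finset.piAntidiag S (k+1) := by
    ext c
    rw [Finset.mem_filter, Finset.mem_piAntidiag, Finset.mem_piAntidiag]
    constructor
    · rintro ⟨⟨hsum, -⟩, hno⟩
      push_neg at hno
      constructor
      · rw [← hsum]
        apply Finset.sum_subset (Finset.subset_univ S)
        intro x _ hx
        rw [hS, Finset.mem_filter] at hx
        push_neg at hx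
        exact hno x (hx (Finset.mem_univ x))
      · intro i hi
        rw [hS, Finset.mem_filter]
        exact ⟨Finset.mem_univ i, fun hbi => hi (hno i hbi)⟩
    · rintro ⟨hsum, hsupp⟩
      have hsum' : ∑ i, c i = k + 1 := by
        rw [← hsum]
        symm
        apply Finset.sum_subset (Finset.subset_univ S)
        intro x _ hx
        by_contra hc0
        exact hx (hsupp x hc0)
      refine ⟨⟨hsum', fun _ _ => Finset.mem_univ _⟩, ?_⟩
      push_neg
      intro i hbi
      by_contra hc0
      have := hsupp i hc0
      rw [hS, Finset.mem_filter] at this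
      exact this.2 hbi
  have hm₁d : m₁ ≤ d + 1 := by omega
  have cardTsum : T.card + (d + k + 1 - m₁).choose (k+1) = (d + k + 1).choose (k+1) := by
    have h1 := Finset.card_filter_add_card_filter_not
      (s := Finset.piAntidiag (Finset.univ : Finset (Fin (d+1))) (k+1))
      (p := fun c => ∃ i, b i ∈ A ∧ c i ≠ 0)
    rw [hTc] at h1
    rw [card_piAntidiag_univ, Fintype.card_fin] at h1
    rw [card_piAntidiag'] at h1
    have hS' : S.card = d + 1 - m₁ := by clear * - hScard; omega
    rw [hS'] at h1
    have e1 : d + 1 + (k + 1) - 1 = d + k + 1 := by clear * -; omega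
    have e2 : d + 1 - m₁ + (k + 1) - 1 = d + k + 1 - m₁ := by clear * - hm₁d; omega
    rw [e1, e2] at h1
    rw [← hT] at h1
    exact h1
  -- assemble
  have hdisj : Disjoint ((A \ B) + kB) ((A ∩ B) + kB) := by
    rw [Finset.disjoint_left]
    rintro x hx hx'
    rw [Finset.mem_add] at hx hx'
    obtain ⟨a, ha, z, hz, rfl⟩ := hx
    obtain ⟨v, hv, z', hz', heq⟩ := hx'
    obtain ⟨c, hc, rfl⟩ := memkB z hz
    obtain ⟨c', hc', rfl⟩ := memkB z' hz'
    rw [Finset.mem_sdiff] at ha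
    rw [Finset.mem_inter] at hv
    have := (L1 a ha.1 ha.2 v hv.1 c c' hc hc' heq.symm).1
    exact ha.2 (this ▸ hv.2)
  have hunion : A + kB = ((A \ B) + kB) ∪ ((A ∩ B) + kB) := by
    rw [← Finset.union_add, Finset.sdiff_union_inter]
  have hcardm : (A \ B).card + m₁ = m := by
    have := Finset.card_sdiff_add_card_inter A B
    omega
  have htotal : (A + kfoldSumset k B).card
      = (A \ B).card * (d + k).choose k + T.card := by
    rw [hkB, hunion, Finset.card_union_of_disjoint hdisj, part1, cardT]
  rw [htotal]
  have hm₁m : m₁ ≤ m := by omega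
  push_cast
  have h1 : ((A \ B).card : ℤ) = (m : ℤ) - m₁ := by
    have := hcardm
    push_cast [← this]
    ring
  have h2 : (T.card : ℤ) = ((d + k + 1).choose (k+1) : ℤ) - ((d + k + 1 - m₁).choose (k+1) : ℤ) := by
    have := cardTsum
    push_cast [← this]
    ring
  rw [h1, h2]
  ring
end

section
/- Let A, B ⊆ ℝ^d be finite sets with |A| = m and |B| = d+1. Assume that B is proper d-dimensional, that A is contained in the convex hull of B, and that |A ∩ B| ≤ 1. Let k be a positive integer. Then |A + kB| = m·C(d+k, k). -/
open Pointwise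

/-!
Write `a ∈ A` in barycentric coordinates `α` with respect to the simplex `B`, and an element of
`kB` as `∑ c_b • b` with `c ∈ ℕ^B` of total mass `k`. Since `B` is affinely independent, the point
`a + ∑ c_b • b` determines the vector `α + c`. If `α + c = α' + c'` with `α ≠ α'`, then `α - α'` is
an integer vector with entries in `[-1, 1]` and sum `0`, so `α` and `α'` are two distinct vertices
of the simplex: `a` and `a'` are two distinct points of `A ∩ B`. Hence `(a, s) ↦ a + s` is
injective on `A × kB`, and `kB` is in bijection with the multisets of size `k` on `B`.
-/

open Finset

section kfoldSumset

variable {α : Type*} [AddCommMonoid α] [DecidableEq α]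

lemma kfoldSumset_succ (k : ℕ) (B : Finset α) :
    kfoldSumset (k + 1) B = kfoldSumset k B + B :=
  sum_range_succ _ k

lemma kfoldSumset_eq_image_sym (k : ℕ) (B : Finset α) :
    kfoldSumset k B = (B.sym k).image fun m : Sym α k => (m : Multiset α).sum := by
  induction k with
  | zero => rfl
  | succ k ih =>
    ext x
    simp only [kfoldSumset_succ, ih, mem_add, mem_image, mem_sym_iff]
    constructor
    · rintro ⟨_, ⟨m, hm, rfl⟩, b, hb, rfl⟩
      refine ⟨b ::ₛ m, fun a ha => ?_, by simp [Sym.coe_cons, add_comm]⟩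
      rcases Sym.mem_cons.1 ha with rfl | ha
      exacts [hb, hm a ha]
    · rintro ⟨m, hm, rfl⟩
      obtain ⟨b, m, rfl⟩ := m.exists_eq_cons_of_succ
      exact ⟨_, ⟨m, fun a ha => hm a (Sym.mem_cons_of_mem ha), rfl⟩, b,
        hm b (Sym.mem_cons_self b m), by simp [Sym.coe_cons, add_comm]⟩

end kfoldSumset

theorem Finset.card_sym {α : Type*} [DecidableEq α] (s : Finset α) (n : ℕ) :
    #(s.sym n) = (#s + n - 1).choose n := by
  conv_lhs => rw [← s.attach_map_val]
  rw [sym_map, card_map, attach_eq_univ, sym_univ, card_univ, Sym.card_sym_eq_choose,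
    Fintype.card_coe]

lemma sum_count_sym_eq {R α : Type*} [AddCommMonoidWithOne R] [DecidableEq α] {B : Finset α}
    {k : ℕ} {m : Sym α k} (hm : m ∈ B.sym k) : ∑ b ∈ B, ((m : Multiset α).count b : R) = k := by
  rw [← Nat.cast_sum, sum_count_of_mem_sym hm]

section AffineCoordinates

variable {𝕜 V : Type*} [Ring 𝕜] [AddCommGroup V] [Module 𝕜 V] [DecidableEq V] {B : Finset V}

lemma sum_sym_eq_sum_count_smul {k : ℕ} {m : Sym V k} (hm : m ∈ B.sym k) :
    (m : Multiset V).sum = ∑ b ∈ B, ((m : Multiset V).count b : 𝕜) • b := by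
  rw [sum_multiset_count_of_subset _ B fun b hb => mem_sym_iff.1 hm b (by simpa using hb)]
  simp only [Nat.cast_smul_eq_nsmul]

lemma AffineIndependent.add_count_eq_of_add_sum_eq (hB : AffineIndependent 𝕜 ((↑) : B → V))
    {α α' : V → 𝕜} (hα₁ : ∑ b ∈ B, α b = 1) (hα'₁ : ∑ b ∈ B, α' b = 1) {k : ℕ}
    {m m' : Sym V k} (hm : m ∈ B.sym k) (hm' : m' ∈ B.sym k)
    (h : ∑ b ∈ B, α b • b + (m : Multiset V).sum = ∑ b ∈ B, α' b • b + (m' : Multiset V).sum) :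
    ∀ b ∈ B, α b + (m : Multiset V).count b = α' b + (m' : Multiset V).count b := by
  refine hB.eq_of_sum_eq_sum_subtype ?_ ?_
  · rw [sum_add_distrib, sum_add_distrib, hα₁, hα'₁, sum_count_sym_eq hm, sum_count_sym_eq hm']
  · simpa only [add_smul, sum_add_distrib, ← sum_sym_eq_sum_count_smul hm,
      ← sum_sym_eq_sum_count_smul hm'] using h

lemma AffineIndependent.injOn_sum_sym [CharZero 𝕜] (hB : AffineIndependent 𝕜 ((↑) : B → V))
    (k : ℕ) : Set.InjOn (fun m : Sym V k => (m : Multiset V).sum) (B.sym k) := by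
  intro m hm m' hm' h
  have hsum : ∑ b ∈ B, ((m : Multiset V).count b : 𝕜) =
      ∑ b ∈ B, ((m' : Multiset V).count b : 𝕜) := by
    rw [sum_count_sym_eq hm, sum_count_sym_eq hm']
  have hvec : ∑ b ∈ B, ((m : Multiset V).count b : 𝕜) • b =
      ∑ b ∈ B, ((m' : Multiset V).count b : 𝕜) • b := by
    rw [← sum_sym_eq_sum_count_smul hm, ← sum_sym_eq_sum_count_smul hm']
    exact h
  have hcount := hB.eq_of_sum_eq_sum_subtype hsum hvec
  refine Sym.coe_injective (Multiset.ext.2 fun b => ?_)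
  by_cases hb : b ∈ B
  · exact_mod_cast hcount b hb
  · have hbm : b ∉ m := fun h => hb (mem_sym_iff.1 hm b h)
    have hbm' : b ∉ m' := fun h => hb (mem_sym_iff.1 hm' b h)
    simp [Multiset.count_eq_zero_of_notMem, hbm, hbm']

end AffineCoordinates

section Simplex

variable {𝕜 V : Type*} [Field 𝕜] [LinearOrder 𝕜] [IsStrictOrderedRing 𝕜]
  [AddCommGroup V] [Module 𝕜 V]

lemma one_le_of_add_natCast_eq {x y : 𝕜} {m n : ℕ} (h : x + m = y + n) (hy : 0 ≤ y)
    (hlt : y < x) : 1 ≤ x := by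
  have hmn : m < n := by exact_mod_cast (by linarith : (m : 𝕜) < n)
  have : (m : 𝕜) + 1 ≤ n := by exact_mod_cast hmn
  linarith

lemma sum_smul_eq_of_one_le {ι : Type*} {s : Finset ι} {w : ι → 𝕜} (p : ι → V)
    (hw₀ : ∀ i ∈ s, 0 ≤ w i) (hw₁ : ∑ i ∈ s, w i = 1) {j : ι} (hj : j ∈ s) (h : 1 ≤ w j) :
    ∑ i ∈ s, w i • p i = p j := by
  classical
  have hsplit := add_sum_erase s w hj
  have hrest_nonneg : 0 ≤ ∑ i ∈ s.erase j, w i :=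
    sum_nonneg fun i hi => hw₀ i (mem_of_mem_erase hi)
  have hrest : ∑ i ∈ s.erase j, w i = 0 := by linarith
  have hj₁ : w j = 1 := by linarith
  rw [sum_eq_single_of_mem j hj fun i hi hij => ?_, hj₁, one_smul]
  rw [(sum_eq_zero_iff_of_nonneg fun i hi => hw₀ i (mem_of_mem_erase hi)).1 hrest i
    (mem_erase.2 ⟨hij, hi⟩), zero_smul]

variable [DecidableEq V] {B : Finset V}

theorem AffineIndependent.injOn_add_sum_sym (hB : AffineIndependent 𝕜 ((↑) : B → V))
    {A : Finset V} (hA : (A : Set V) ⊆ convexHull 𝕜 (B : Set V)) (hAB : #(A ∩ B) ≤ 1) (k : ℕ) :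
    Set.InjOn (fun x : V × Sym V k => x.1 + (x.2 : Multiset V).sum) (A ×ˢ B.sym k : Finset _) := by
  rintro ⟨a, m⟩ ham ⟨a', m'⟩ ham' h
  simp only [coe_product, Set.mem_prod, mem_coe] at ham ham' h
  obtain ⟨α, hα₀, hα₁, rfl⟩ := mem_convexHull'.1 (hA ham.1)
  obtain ⟨α', hα'₀, hα'₁, rfl⟩ := mem_convexHull'.1 (hA ham'.1)
  have hcoord := hB.add_count_eq_of_add_sum_eq hα₁ hα'₁ ham.2 ham'.2 h
  by_cases hαα' : ∀ b ∈ B, α b = α' b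
  · have ha : ∑ b ∈ B, α b • b = ∑ b ∈ B, α' b • b := sum_congr rfl fun b hb => by rw [hαα' b hb]
    rw [ha] at h ⊢
    exact Prod.ext rfl (hB.injOn_sum_sym k ham.2 ham'.2 (add_left_cancel h))
  push Not at hαα'
  obtain ⟨b, hb, hlt⟩ := exists_pos_of_sum_zero_of_exists_nonzero (s := B) (α - α')
    (by simp [sum_sub_distrib, hα₁, hα'₁])
    (by simpa [sub_eq_zero] using hαα')
  obtain ⟨b', hb', hlt'⟩ := exists_pos_of_sum_zero_of_exists_nonzero (s := B) (α' - α)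
    (by simp [sum_sub_distrib, hα₁, hα'₁])
    (by simpa [sub_eq_zero, eq_comm] using hαα')
  simp only [Pi.sub_apply, sub_pos] at hlt hlt'
  -- `α b - α' b` is a positive integer, so `1 ≤ α b` and `a` is the vertex `b`; likewise `a' = b'`.
  have ha : ∑ b ∈ B, α b • b = b := sum_smul_eq_of_one_le id hα₀ hα₁ hb
    (one_le_of_add_natCast_eq (hcoord b hb) (hα'₀ b hb) hlt)
  have ha' : ∑ b ∈ B, α' b • b = b' := sum_smul_eq_of_one_le id hα'₀ hα'₁ hb'
    (one_le_of_add_natCast_eq (hcoord b' hb').symm (hα₀ b' hb') hlt')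
  have hbb' : b = b' := card_le_one.1 hAB _ (mem_inter.2 ⟨ha ▸ ham.1, hb⟩) _
    (mem_inter.2 ⟨ha' ▸ ham'.1, hb'⟩)
  subst hbb'
  exact absurd hlt hlt'.asymm

theorem AffineIndependent.card_add_kfoldSumset (hB : AffineIndependent 𝕜 ((↑) : B → V))
    {A : Finset V} (hA : (A : Set V) ⊆ convexHull 𝕜 (B : Set V)) (hAB : #(A ∩ B) ≤ 1) (k : ℕ) :
    #(A + kfoldSumset k B) = #A * (#B + k - 1).choose k := by
  have himage : A + kfoldSumset k B =
      (A ×ˢ B.sym k).image fun x : V × Sym V k => x.1 + (x.2 : Multiset V).sum := by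
    rw [kfoldSumset_eq_image_sym, ← image_add_product, ← image_id (s := A),
      ← prodMap_image_product, image_image, image_id]
    rfl
  rw [himage, card_image_of_injOn (hB.injOn_add_sum_sym hA hAB k), card_product, card_sym]

end Simplex

lemma Finset.affineIndependent_of_affineSpan_eq_top {k V : Type*} [DivisionRing k]
    [AddCommGroup V] [Module k V] {B : Finset V} (hcard : #B = Module.finrank k V + 1)
    (hspan : affineSpan k (B : Set V) = ⊤) : AffineIndependent k ((↑) : B → V) := by
  have hrange : Set.range ((↑) : B → V) = B := Subtype.range_coe
  rw [affineIndependent_iff_finrank_vectorSpan_eq k _ (by rwa [Fintype.card_coe]),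
    hrange, ← direction_affineSpan, hspan, AffineSubspace.direction_top, finrank_top]

theorem simplex_case_small_intersection_general (d m k : ℕ)
    (A B : Finset (Fin d → ℝ))
    (hm : A.card = m) (hB : B.card = d + 1)
    (hBspan : affineSpan ℝ (B : Set (Fin d → ℝ)) = ⊤)
    (hAB : (A : Set (Fin d → ℝ)) ⊆ convexHull ℝ (B : Set (Fin d → ℝ)))
    (hAcapB : (A ∩ B).card ≤ 1) :
    (A + kfoldSumset k B).card = m * (d + k).choose k := by
  have hBind : AffineIndependent ℝ ((↑) : B → Fin d → ℝ) :=
    affineIndependent_of_affineSpan_eq_top (by rw [hB, Module.finrank_fin_fun]) hBspan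
  rw [hBind.card_add_kfoldSumset hAB hAcapB, hm, hB, Nat.add_right_comm, Nat.add_sub_cancel]

theorem simplex_case_small_intersection (d m k : ℕ) (hk : 0 < k)
    (A B : Finset (Fin d → ℝ))
    (hm : A.card = m) (hB : B.card = d + 1)
    (hBspan : affineSpan ℝ (B : Set (Fin d → ℝ)) = ⊤)
    (hAB : (A : Set (Fin d → ℝ)) ⊆ convexHull ℝ (B : Set (Fin d → ℝ)))
    (hAcapB : (A ∩ B).card ≤ 1) :
    (A + kfoldSumset k B).card = m * (d + k).choose k :=
  simplex_case_small_intersection_general d m k A B hm hB hBspan hAB hAcapB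
end

section
/- Let k ≥ 2 and let A_1, …, A_k be finite nonempty sets of integers. For each i let A_i' be the set consisting of the smallest and the largest elements of A_i. Put S_i = A_1 + ⋯ + A_{i−1} + A_{i+1} + ⋯ + A_k (the sum omitting A_i), S_i' = A_1 + ⋯ + A_{i−1} + A_i' + A_{i+1} + ⋯ + A_k, and S' = ⋃_{i=1}^k S_i'. Then (k−1)·|S'| ≥ Σ_{i=1}^k |S_i| − 1. -/
/-!
Let `m i ≤ M i` be the extreme elements of `A i`, `d i = M i - m i` and `μ = ∑ i, m i`. With
`c i = μ + ∑ j < i, d j`, the intervals `I i = (c i, c i + d i]` tile `(μ, ∑ i, M i]`, which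
contains every element of `S'` other than `μ`. Sending `s ∈ S_i` to `s + m i` when that is
`≤ c i` and to `s + M i` otherwise is injective with image in `S_i' \ I i`. An element
`z ≠ μ` of `S'` misses `S_t' \ I t` for the `t` with `z ∈ I t`, so double counting gives
`∑ i, |S_i| ≤ ∑ i, |S_i' \ I i| ≤ (k - 1) |S'| + 1`.
-/

open Pointwise Finset

lemma exists_mem_Ioc_partial_sum {ι α : Type*} [LinearOrder ι] [AddCommMonoid α]
    [LinearOrder α] (s : Finset ι) (d : ι → α) {a z : α} (haz : a < z)
    (hz : z ≤ a + ∑ j ∈ s, d j) :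
    ∃ t ∈ s, z ∈ Set.Ioc (a + ∑ j ∈ s with j < t, d j)
      (a + ∑ j ∈ s with j < t, d j + d t) := by
  induction s using Finset.induction_on_max with
  | empty => exact absurd haz (by simpa using hz)
  | insert t s hlt ih =>
    by_cases hzs : z ≤ a + ∑ j ∈ s, d j
    · obtain ⟨u, hu, hzu⟩ := ih hzs
      have hsame : {j ∈ insert t s | j < u} = {j ∈ s | j < u} := by
        rw [filter_insert, if_neg (not_lt.2 (hlt u hu).le)]
      exact ⟨u, mem_insert_of_mem hu, by rwa [hsame]⟩
    · have hts : t ∉ s := fun h => lt_irrefl t (hlt t h)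
      have hbelow : {j ∈ insert t s | j < t} = s := by
        rw [filter_insert, if_neg (lt_irrefl t), filter_true_of_mem hlt]
      refine ⟨t, mem_insert_self t s, ?_⟩
      rw [hbelow, add_assoc, add_comm _ (d t), ← sum_insert hts]
      exact ⟨not_le.1 hzs, hz⟩

lemma mem_Icc_of_mem_sum {ι α : Type*} [DecidableEq α] [AddCommMonoid α] [LinearOrder α]
    [IsOrderedAddMonoid α] {s : Finset ι} {A : ι → Finset α} (hA : ∀ i, (A i).Nonempty)
    {z : α} (hz : z ∈ ∑ i ∈ s, A i) :
    z ∈ Set.Icc (∑ i ∈ s, (A i).min' (hA i)) (∑ i ∈ s, (A i).max' (hA i)) := by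
  rw [← mem_coe, coe_sum, Set.mem_finsetSum] at hz
  obtain ⟨g, hg, rfl⟩ := hz
  exact ⟨sum_le_sum fun i hi => min'_le _ _ (hg hi),
    sum_le_sum fun i hi => le_max' _ _ (hg hi)⟩

lemma sum_card_le_of_forall_ne_exists_notMem {ι α : Type*} [Fintype ι] [DecidableEq α]
    (S : Finset α) (T : ι → Finset α) (hT : ∀ i, T i ⊆ S) (z₀ : α)
    (hmiss : ∀ z ∈ S, z ≠ z₀ → ∃ i, z ∉ T i) :
    (∑ i, #(T i) : ℤ) ≤ (Fintype.card ι - 1) * #S + 1 := by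
  classical
  let r : ι → α → Prop := fun i z => z ∈ T i
  have hcover : ∀ z ∈ S,
      (#(univ.bipartiteBelow r z) : ℤ) ≤ Fintype.card ι - 1 + if z = z₀ then 1 else 0 := by
    intro z hz
    split_ifs with h
    · simpa using card_le_univ _
    · obtain ⟨i, hi⟩ := hmiss z hz h
      have hsub : univ.bipartiteBelow r z ⊆ univ.erase i :=
        fun j hj => mem_erase.2 ⟨by rintro rfl; exact hi (mem_filter.1 hj).2, mem_univ j⟩
      have hle := card_le_card hsub
      rw [card_erase_of_mem (mem_univ i), card_univ] at hle
      have : 0 < Fintype.card ι := Fintype.card_pos_iff.2 ⟨i⟩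
      omega
  have hT' : ∀ i, S.bipartiteAbove r i = T i := fun i => filter_mem_eq_of_subset (hT i)
  calc (∑ i, #(T i) : ℤ) = ∑ z ∈ S, (#(univ.bipartiteBelow r z) : ℤ) := by
        simp only [← hT']; exact_mod_cast sum_card_bipartiteAbove_eq_sum_card_bipartiteBelow r
    _ ≤ ∑ z ∈ S, (Fintype.card ι - 1 + if z = z₀ then 1 else 0 : ℤ) := sum_le_sum hcover
    _ ≤ (Fintype.card ι - 1) * #S + 1 := by
        rw [sum_add_distrib, sum_const, sum_ite_eq', nsmul_eq_mul]
        split_ifs <;> linarith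

lemma card_le_card_pair_add_sdiff_Ioc (X : Finset ℤ) {m M : ℤ} (hmM : m ≤ M) (c : ℤ) :
    #X ≤ #(({m, M} + X) \ Ioc c (c + (M - m))) := by
  let f : ℤ → ℤ := fun s => if s + m ≤ c then s + m else s + M
  refine card_le_card_of_injOn f (fun s hs => ?_) (fun s₁ _ s₂ _ h => ?_)
  · rw [coe_sdiff, Set.mem_sdiff, mem_coe, mem_coe, mem_Ioc]
    by_cases h : s + m ≤ c
    · simp only [f, if_pos h]
      exact ⟨add_comm s m ▸ add_mem_add (by simp) hs, by omega⟩
    · simp only [f, if_neg h]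
      exact ⟨add_comm s M ▸ add_mem_add (by simp) hs, by omega⟩
  · simp only [f] at h
    split_ifs at h <;> omega

theorem subsums_lower_bound_general (k : ℕ)
    (A : Fin k → Finset ℤ) (hA : ∀ i, (A i).Nonempty)
    (A' : Fin k → Finset ℤ)
    (hA' : ∀ i, A' i = {(A i).min' (hA i), (A i).max' (hA i)})
    (Si : Fin k → Finset ℤ)
    (hSi : ∀ i, Si i = ∑ j ∈ Finset.univ.erase i, A j)
    (Si' : Fin k → Finset ℤ)
    (hSi' : ∀ i, Si' i = A' i + Si i)
    (S' : Finset ℤ) (hS' : S' = Finset.univ.biUnion Si') :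
    ((k : ℤ) - 1) * S'.card ≥ (∑ i, ((Si i).card : ℤ)) - 1 := by
  set m := fun i => (A i).min' (hA i)
  set d := fun i => (A i).max' (hA i) - m i
  set c := fun i => ∑ j, m j + ∑ j with j < i, d j
  set T := fun i => Si' i \ Ioc (c i) (c i + d i)
  have hcard : ∀ i, #(Si i) ≤ #(T i) := fun i => by
    simpa only [T, hSi', hA'] using
      card_le_card_pair_add_sdiff_Ioc (Si i) (min'_le_max' _ (hA i)) (c i)
  have hTS : ∀ i, T i ⊆ S' := fun i =>
    sdiff_subset.trans (hS' ▸ subset_biUnion_of_mem Si' (mem_univ i))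
  have hS'sum : S' ⊆ ∑ i, A i := by
    rw [hS', biUnion_subset]
    intro i _
    rw [hSi', hA', hSi, ← add_sum_erase _ _ (mem_univ i)]
    exact add_subset_add_right
      (insert_subset (min'_mem _ _) (singleton_subset_iff.2 (max'_mem _ _)))
  have hmiss : ∀ z ∈ S', z ≠ ∑ i, m i → ∃ i, z ∉ T i := by
    intro z hz hne
    obtain ⟨hlo, hhi⟩ := mem_Icc_of_mem_sum hA (hS'sum hz)
    have hmax : ∑ i, (A i).max' (hA i) = ∑ i, m i + ∑ i, d i := by
      rw [← sum_add_distrib]; simp [d]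
    obtain ⟨t, -, hzt⟩ :=
      exists_mem_Ioc_partial_sum univ d (lt_of_le_of_ne hlo hne.symm) (hmax ▸ hhi)
    exact ⟨t, fun h => (mem_sdiff.1 h).2 (mem_Ioc.2 hzt)⟩
  have hcount := sum_card_le_of_forall_ne_exists_notMem S' T hTS _ hmiss
  rw [Fintype.card_fin] at hcount
  have hsum : ∑ i, (#(Si i) : ℤ) ≤ ∑ i, (#(T i) : ℤ) :=
    sum_le_sum fun i _ => by exact_mod_cast hcard i
  linarith

theorem subsums_lower_bound (k : ℕ) (hk : 2 ≤ k)
    (A : Fin k → Finset ℤ) (hA : ∀ i, (A i).Nonempty)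
    (A' : Fin k → Finset ℤ)
    (hA' : ∀ i, A' i = {(A i).min' (hA i), (A i).max' (hA i)})
    (Si : Fin k → Finset ℤ)
    (hSi : ∀ i, Si i = ∑ j ∈ Finset.univ.erase i, A j)
    (Si' : Fin k → Finset ℤ)
    (hSi' : ∀ i, Si' i = A' i + Si i)
    (S' : Finset ℤ) (hS' : S' = Finset.univ.biUnion Si') :
    ((k : ℤ) - 1) * S'.card ≥ (∑ i, ((Si i).card : ℤ)) - 1 :=
  subsums_lower_bound_general k A hA A' hA' Si hSi Si' hSi' S' hS'
end
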